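/- Suppose X is doubling, let p ∈ (0,∞], and let K ⊆ X⁺ be a subset contained in a cylinder B(c_K,r_K) × (κ₀,κ₁). Then there are constants, depending only on X, K, and p, such that for every measurable f on X⁺: ‖1_K f‖_{T^{p,∞}} ≲_{K,p} ‖f‖_{L^∞(K)} ≲_{K,p} ‖f‖_{T^{p,∞}}. -/

import Mathlib

open MeasureTheory Metric Set Filter ENNReal
open scoped NNReal Topology

noncomputable section

namespace WTS

variable {X : Type*} [MetricSpace X] [MeasurableSpace X]

/-- The measure `dt/t` on `(0,∞) ⊆ ℝ`. -/
def tMeasure : Measure ℝ :=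
  (volume.restrict (Ioi (0:ℝ))).withDensity fun t => ENNReal.ofReal t⁻¹

/-- The measure `dμ(y) dt/t` on the generalised half-space `X⁺ = X × (0,∞)`. -/
def muPlus (μ : Measure X) : Measure (X × ℝ) := μ.prod tMeasure

/-- The cone with vertex `x`. -/
def cone (x : X) : Set (X × ℝ) := {p | dist x p.1 < p.2}

/-- The tent over the ball `B(z,r)`. -/
def tent (z : X) (r : ℝ) : Set (X × ℝ) := {p | 0 < p.2 ∧ ball p.1 p.2 ⊆ ball z r}

/-- Ball volume `V(x,t)`. -/
def vol (μ : Measure X) (x : X) (t : ℝ) : ℝ≥0∞ := μ (ball x t)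

/-- The multiplication operator `V^s`. -/
def Vpow (μ : Measure X) (s : ℝ) (f : X × ℝ → ℂ) : X × ℝ → ℂ := fun p =>
  (((vol μ p.1 p.2).toReal ^ s : ℝ) : ℂ) * f p

/-- `𝒜^q f (x)`, `q` finite. -/
def Aq (μ : Measure X) (q : ℝ) (f : X × ℝ → ℂ) (x : X) : ℝ≥0∞ :=
  (∫⁻ p in cone x, (‖f p‖₊ : ℝ≥0∞) ^ q / vol μ p.1 p.2 ∂muPlus μ) ^ (1/q)

/-- `𝒜^∞ f (x)`. -/
def Ainf (μ : Measure X) (f : X × ℝ → ℂ) (x : X) : ℝ≥0∞ :=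
  essSup (fun p => (‖f p‖₊ : ℝ≥0∞)) ((muPlus μ).restrict (cone x))

/-- `𝒜^q f (x)` for `q ∈ (0,∞]`. -/
def AqE (μ : Measure X) (q : ℝ≥0∞) (f : X × ℝ → ℂ) (x : X) : ℝ≥0∞ :=
  if q = ∞ then Ainf μ f x else Aq μ q.toReal f x

/-- `𝒞^q_α f (x)`, `q` finite. -/
def Cq (μ : Measure X) (q α : ℝ) (f : X × ℝ → ℂ) (x : X) : ℝ≥0∞ :=
  ⨆ (z : X) (r : ℝ) (_ : 0 < r ∧ x ∈ ball z r),
    μ (ball z r) ^ (-α) *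
      ((μ (ball z r))⁻¹ * ∫⁻ p in tent z r, (‖f p‖₊ : ℝ≥0∞) ^ q ∂muPlus μ) ^ (1/q)

/-- `𝒞^∞_α f (x)`. -/
def Cinf (μ : Measure X) (α : ℝ) (f : X × ℝ → ℂ) (x : X) : ℝ≥0∞ :=
  ⨆ (z : X) (r : ℝ) (_ : 0 < r ∧ x ∈ ball z r),
    μ (ball z r) ^ (-(1+α)) *
      essSup (fun p => (‖f p‖₊ : ℝ≥0∞)) ((muPlus μ).restrict (tent z r))

/-- `𝒞^q_α f (x)` for `q ∈ (0,∞]`. -/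
def CqE (μ : Measure X) (q : ℝ≥0∞) (α : ℝ) (f : X × ℝ → ℂ) (x : X) : ℝ≥0∞ :=
  if q = ∞ then Cinf μ α f x else Cq μ q.toReal α f x

/-- The (unweighted) tent space quasinorm `‖f‖_{T^{p,q}}`, `p, q` finite. -/
def tentNorm (μ : Measure X) (p q : ℝ) (f : X × ℝ → ℂ) : ℝ≥0∞ :=
  (∫⁻ x, Aq μ q f x ^ p ∂μ) ^ (1/p)

/-- The weighted tent space quasinorm `‖f‖_{T^{p,q}_s}`, `p, q` finite. -/
def tentNormS (μ : Measure X) (p q s : ℝ) (f : X × ℝ → ℂ) : ℝ≥0∞ :=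
  tentNorm μ p q (Vpow μ (-s) f)

/-- The quasinorm `‖f‖_{T^{p,∞}}`, `p` finite. -/
def tentNormQInf (μ : Measure X) (p : ℝ) (f : X × ℝ → ℂ) : ℝ≥0∞ :=
  (∫⁻ x, Ainf μ f x ^ p ∂μ) ^ (1/p)

/-- The norm `‖f‖_{T^{∞,q}_{s;α}}`, `q` finite. -/
def tentNormPInf (μ : Measure X) (q s α : ℝ) (f : X × ℝ → ℂ) : ℝ≥0∞ :=
  essSup (Cq μ q α (Vpow μ (-s) f)) μ

/-- The norm `‖f‖_{T^{∞,∞}_{s;α}} = sup_B μ(B)^{-α} ‖V^{-s} f‖_{L^∞(T(B))}`. -/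
def tentNormInfInf (μ : Measure X) (s α : ℝ) (f : X × ℝ → ℂ) : ℝ≥0∞ :=
  ⨆ (z : X) (r : ℝ) (_ : 0 < r),
    μ (ball z r) ^ (-α) *
      essSup (fun p => (‖Vpow μ (-s) f p‖₊ : ℝ≥0∞)) ((muPlus μ).restrict (tent z r))

/-- `‖V^{-s} f‖_{L^∞(X⁺)}`. -/
def linfNormPlus (μ : Measure X) (s : ℝ) (f : X × ℝ → ℂ) : ℝ≥0∞ :=
  essSup (fun p => (‖Vpow μ (-s) f p‖₊ : ℝ≥0∞)) (muPlus μ)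

/-- The quasinorm of `T^{p,q}_s` for `p, q ∈ (0,∞]` (with `α = 0` when `p = ∞`,
and with `‖V^{-s}f‖_{L^∞(X⁺)}` when `p = q = ∞`). -/
def TNE (μ : Measure X) (p q : ℝ≥0∞) (s : ℝ) (f : X × ℝ → ℂ) : ℝ≥0∞ :=
  if p = ∞ then
    (if q = ∞ then linfNormPlus μ s f else tentNormPInf μ q.toReal s 0 f)
  else (∫⁻ x, AqE μ q (Vpow μ (-s) f) x ^ p.toReal ∂μ) ^ (1/p.toReal)

/-- The norm of `L^q_s(X⁺)`, i.e. `L^q` with respect to `V^{-qs-1} dμ dt/t`. -/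
def LqsNorm (μ : Measure X) (q s : ℝ) (f : X × ℝ → ℂ) : ℝ≥0∞ :=
  (∫⁻ p, (‖f p‖₊ : ℝ≥0∞) ^ q * vol μ p.1 p.2 ^ (-(q*s)) / vol μ p.1 p.2 ∂muPlus μ) ^ (1/q)

/-- `L^q` norm with respect to a measure. -/
def LqNorm {α : Type*} [MeasurableSpace α] (ν : Measure α) (q : ℝ) (f : α → ℂ) : ℝ≥0∞ :=
  (∫⁻ x, (‖f x‖₊ : ℝ≥0∞) ^ q ∂ν) ^ (1/q)

/-- Nondegeneracy of a metric measure space. -/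
def Nondeg (μ : Measure X) : Prop :=
  ∀ (x : X) (r : ℝ), 0 < r → 0 < μ (ball x r) ∧ μ (ball x r) < ∞

/-- The doubling condition. -/
def Doubling (μ : Measure X) : Prop :=
  ∃ C : ℝ≥0∞, 1 ≤ C ∧ C < ∞ ∧ ∀ (x : X) (r : ℝ), 0 < r → μ (ball x (2*r)) ≤ C * μ (ball x r)

/-- AD-regularity of dimension `n` (for all radii, as appropriate for unbounded spaces). -/
def ADRegular (μ : Measure X) (n : ℝ) : Prop :=
  ∃ C : ℝ≥0∞, 1 ≤ C ∧ C < ∞ ∧ ∀ (x : X) (r : ℝ), 0 < r →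
    ENNReal.ofReal (r ^ n) ≤ C * μ (ball x r) ∧ μ (ball x r) ≤ C * ENNReal.ofReal (r ^ n)

/-- Metric unboundedness. -/
def MetricUnbounded (X : Type*) [MetricSpace X] : Prop :=
  ∀ R : ℝ, ∃ x y : X, R < dist x y

/-- A function on `X⁺` is cylindrically supported if it vanishes a.e. outside a cylinder. -/
def CylSupported (μ : Measure X) (f : X × ℝ → ℂ) : Prop :=
  ∃ (z : X) (r a b : ℝ), 0 < r ∧ 0 < a ∧ a < b ∧
    ∀ᵐ p ∂muPlus μ, p ∉ ball z r ×ˢ Ioo a b → f p = 0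

/-- The K-functional associated with two quasinorms on functions. -/
def Kfun {α : Type*} [MeasurableSpace α] (ν : Measure α)
    (N₀ N₁ : (α → ℂ) → ℝ≥0∞) (t : ℝ≥0∞) (f : α → ℂ) : ℝ≥0∞ :=
  ⨅ (g : α → ℂ) (h : α → ℂ) (_ : f =ᵐ[ν] g + h), N₀ g + t * N₁ h

/-- The real interpolation quasinorm `‖f‖_{(A₀,A₁)_{θ,p}}`, continuous form. -/
def interpNorm {α : Type*} [MeasurableSpace α] (ν : Measure α)
    (N₀ N₁ : (α → ℂ) → ℝ≥0∞) (θ p : ℝ) (f : α → ℂ) : ℝ≥0∞ :=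
  (∫⁻ t in Ioi (0:ℝ),
      (ENNReal.ofReal (t ^ (-θ)) * Kfun ν N₀ N₁ (ENNReal.ofReal t) f) ^ p *
        ENNReal.ofReal t⁻¹) ^ (1/p)

/-- The real interpolation quasinorm, discrete form. -/
def interpNormD {α : Type*} [MeasurableSpace α] (ν : Measure α)
    (N₀ N₁ : (α → ℂ) → ℝ≥0∞) (θ p : ℝ) (f : α → ℂ) : ℝ≥0∞ :=
  (∑' k : ℤ, (ENNReal.ofReal ((2:ℝ) ^ (-(k:ℝ) * θ)) *
      Kfun ν N₀ N₁ (ENNReal.ofReal ((2:ℝ) ^ (k:ℝ))) f) ^ p) ^ (1/p)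

/-- The Whitney region `Ω_{c₀,c₁}(x,t)`. -/
def whitney (c₀ c₁ : ℝ) (x : X) (t : ℝ) : Set (X × ℝ) :=
  ball x (c₀ * t) ×ˢ Ioo (t / c₁) (c₁ * t)

/-- The `L^q`-Whitney average `𝒲^q_{c₀,c₁} f (x,t)` (with respect to `dμ(ξ) dτ`). -/
def Wavg (μ : Measure X) (c₀ c₁ q : ℝ) (f : X × ℝ → ℂ) (x : X) (t : ℝ) : ℝ≥0∞ :=
  (((μ.prod volume) (whitney c₀ c₁ x t))⁻¹ *
      ∫⁻ p in whitney c₀ c₁ x t, (‖f p‖₊ : ℝ≥0∞) ^ q ∂μ.prod volume) ^ (1/q)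

/-- The Z-space quasinorm `‖f‖_{Z^{p,q}_s(X;c₀,c₁)}`. -/
def Znorm (μ : Measure X) (p q s c₀ c₁ : ℝ) (f : X × ℝ → ℂ) : ℝ≥0∞ :=
  (∫⁻ w, Wavg μ c₀ c₁ q (Vpow μ (-s) f) w.1 w.2 ^ p ∂muPlus μ) ^ (1/p)


/-- The quasinorm of `T^{p,∞}` for `p ∈ (0,∞]`. -/
def TPinf {X : Type*} [MetricSpace X] [MeasurableSpace X] (μ : Measure X)
    (p : ℝ≥0∞) (f : X × ℝ → ℂ) : ℝ≥0∞ :=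
  if p = ∞ then essSup (fun w => (‖f w‖₊ : ℝ≥0∞)) (muPlus μ)
  else tentNormQInf μ p.toReal f

/-!
For `p < ∞`, the first bound holds because `𝒜^∞(1_K f)` is at most `‖f‖_{L^∞(K)}` everywhere and
vanishes off the ball `B(c_K, r_K + κ₁)`, which has finite measure. For the second, cover
`B(c_K, r_K)` by finitely many balls `B(x_i, κ₀/2)`, which doubling allows (a maximal
`κ₀/2`-separated subset is finite because the disjoint balls of half the radius have measure
bounded below). Every point of `K` above `B(x_i, κ₀/2)` lies in the cone of every vertex in
`B(x_i, κ₀/2)`, so `𝒜^∞ f ≥ ‖f‖_{L^∞(K ∩ (B(x_i, κ₀/2) × ℝ))}` on a ball whose measure is bounded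
below; hence `‖f‖_{T^{p,∞}}` controls `‖f‖_{L^∞(K)}`.
-/

section EssSup

variable {α : Type*} [MeasurableSpace α] {ν : Measure α} {g : α → ℝ≥0∞} {S : Set α} {c : ℝ≥0∞}

lemma essSup_restrict_le_iff (hg : Measurable g) :
    essSup g (ν.restrict S) ≤ c ↔ ∀ᵐ x ∂ν, x ∈ S → g x ≤ c := by
  rw [← ae_restrict_iff (measurableSet_le hg measurable_const)]
  exact ⟨fun h => Eventually.mono ae_le_essSup fun x hx => hx.trans h, essSup_le_of_ae_le c⟩

lemma essSup_indicator_le_essSup_restrict (hg : Measurable g) :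
    essSup (S.indicator g) ν ≤ essSup g (ν.restrict S) := by
  refine essSup_le_of_ae_le _ <|
    ((essSup_restrict_le_iff (S := S) hg).1 le_rfl).mono fun x hx => ?_
  by_cases hxS : x ∈ S
  · simpa [indicator_of_mem hxS] using hx hxS
  · simp [indicator_of_notMem hxS]

lemma essSup_nnnorm_indicator_le {E : Type*} [NormedAddCommGroup E] [MeasurableSpace E]
    [OpensMeasurableSpace E] {f : α → E} (hf : Measurable f) (ν : Measure α) :
    essSup (fun x => (‖S.indicator f x‖₊ : ℝ≥0∞)) ν ≤
      essSup (fun x => (‖f x‖₊ : ℝ≥0∞)) (ν.restrict S) := by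
  have hind : (fun x => (‖S.indicator f x‖₊ : ℝ≥0∞)) = S.indicator fun x => (‖f x‖₊ : ℝ≥0∞) :=
    funext fun x => by by_cases hx : x ∈ S <;> simp [hx]
  rw [hind]
  exact essSup_indicator_le_essSup_restrict hf.nnnorm.coe_nnreal_ennreal

lemma essSup_restrict_le_of_subset_biUnion {ι : Type*} {t : Set ι} (ht : t.Finite)
    {U : ι → Set α} (hS : S ⊆ ⋃ i ∈ t, U i) (hg : Measurable g)
    (h : ∀ i ∈ t, essSup g (ν.restrict (S ∩ U i)) ≤ c) : essSup g (ν.restrict S) ≤ c := by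
  simp only [essSup_restrict_le_iff hg] at h ⊢
  filter_upwards [(eventually_all_finite ht).2 h] with x hx hxS
  obtain ⟨i, hi, hxU⟩ := mem_iUnion₂.1 (hS hxS)
  exact hx i hi ⟨hxS, hxU⟩

end EssSup

section Doubling

variable {μ : Measure X}

lemma measure_ball_two_pow_mul_le {D : ℝ≥0∞}
    (hD : ∀ (x : X) (r : ℝ), 0 < r → μ (ball x (2 * r)) ≤ D * μ (ball x r))
    (x : X) {s : ℝ} (hs : 0 < s) (k : ℕ) : μ (ball x (2 ^ k * s)) ≤ D ^ k * μ (ball x s) := by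
  induction k with
  | zero => simp
  | succ k ih =>
    calc μ (ball x (2 ^ (k + 1) * s)) = μ (ball x (2 * (2 ^ k * s))) := by ring_nf
      _ ≤ D * μ (ball x (2 ^ k * s)) := hD x _ (by positivity)
      _ ≤ D * (D ^ k * μ (ball x s)) := by gcongr
      _ = D ^ (k + 1) * μ (ball x s) := by rw [← mul_assoc, ← pow_succ']

lemma Doubling.exists_le_measure_ball (hμ : Nondeg μ) (hd : Doubling μ) (z : X) (R : ℝ)
    {ε : ℝ} (hε : 0 < ε) : ∃ m : ℝ≥0∞, 0 < m ∧ m ≠ ∞ ∧ ∀ x ∈ ball z R, m ≤ μ (ball x ε) := by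
  obtain ⟨D, hD1, hDtop, hD⟩ := hd
  obtain ⟨k, hk⟩ := pow_unbounded_of_one_lt ((R + ε) / ε) (one_lt_two (α := ℝ))
  rw [div_lt_iff₀ hε] at hk
  have hDk : D ^ k ≠ 0 := pow_ne_zero _ (zero_lt_one.trans_le hD1).ne'
  refine ⟨μ (ball z ε) / D ^ k, ENNReal.div_pos (hμ z ε hε).1.ne' (pow_ne_top hDtop.ne),
    ENNReal.div_ne_top (hμ z ε hε).2.ne hDk, fun x hx => ENNReal.div_le_of_le_mul' ?_⟩
  calc μ (ball z ε) ≤ μ (ball x (2 ^ k * ε)) := measure_mono fun y hy => by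
        rw [mem_ball] at hx hy ⊢
        linarith [dist_triangle y z x, dist_comm x z]
    _ ≤ D ^ k * μ (ball x ε) := measure_ball_two_pow_mul_le hD x hε k

lemma exists_maximal_isSeparated {Y : Type*} [PseudoEMetricSpace Y] (ε : ℝ≥0∞) (s : Set Y) :
    ∃ N, Maximal (fun N => N ⊆ s ∧ IsSeparated ε N) N :=
  zorn_subset _ fun c hcS hc =>
    ⟨⋃₀ c, ⟨sUnion_subset fun _ hN => (hcS hN).1,
        (pairwise_sUnion hc.directedOn).2 fun _ hN => (hcS hN).2⟩,
      fun _ hN => subset_sUnion_of_mem hN⟩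

lemma Doubling.exists_finite_cover_ball [OpensMeasurableSpace X] (hμ : Nondeg μ)
    (hd : Doubling μ) (z : X) {r δ : ℝ} (hr : 0 < r) (hδ : 0 < δ) :
    ∃ N ⊆ ball z r, N.Finite ∧ ball z r ⊆ ⋃ y ∈ N, closedBall y δ := by
  obtain ⟨N, hN⟩ := exists_maximal_isSeparated (δ.toNNReal : ℝ≥0∞) (ball z r)
  have hcover := isCover_iff_subset_iUnion_closedBall.1 (IsCover.of_maximal_isSeparated hN)
  rw [Real.coe_toNNReal _ hδ.le] at hcover
  refine ⟨N, hN.1.1, ?_, hcover⟩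
  obtain ⟨m, hm0, -, hm⟩ := hd.exists_le_measure_ball hμ z r (half_pos hδ)
  have hdisj : Pairwise fun y y' : N => Disjoint (ball (y : X) (δ / 2)) (ball y' (δ / 2)) := by
    intro y y' hyy'
    refine ball_disjoint_ball ?_
    have hsep : (δ.toNNReal : ℝ≥0∞) < edist (y : X) y' :=
      hN.1.2 y.2 y'.2 (Subtype.coe_ne_coe.2 hyy')
    rw [edist_dist, ← ENNReal.ofReal.eq_def, ENNReal.ofReal_lt_ofReal_iff_of_nonneg hδ.le] at hsep
    linarith
  have hunion : μ (⋃ y : N, ball (y : X) (δ / 2)) ≠ ∞ := by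
    refine ne_top_of_le_ne_top (hμ z (r + δ / 2) (by positivity)).2.ne
      (measure_mono (iUnion_subset fun y => ball_subset_ball' ?_))
    linarith [mem_ball.1 (hN.1.1 y.2)]
  have hfin := Measure.finite_const_le_meas_of_disjoint_iUnion μ hm0
    (fun _ => measurableSet_ball) hdisj hunion
  rw [← finite_coe_iff, ← finite_univ_iff]
  exact hfin.subset fun y _ => hm y (hN.1.1 y.2)

end Doubling

section Cones

lemma measurableSet_cone [OpensMeasurableSpace X] (x : X) : MeasurableSet (cone x) :=
  measurableSet_lt ((continuous_const.dist continuous_id).measurable.comp measurable_fst)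
    measurable_snd

lemma mem_ball_of_mem_cone {Y : Type*} [MetricSpace Y] {x z : Y} {r b : ℝ} {w : Y × ℝ}
    (hw : w ∈ cone x) (hw₁ : w.1 ∈ ball z r) (hw₂ : w.2 < b) : x ∈ ball z (r + b) := by
  have hxw : dist x w.1 < w.2 := hw
  rw [mem_ball] at hw₁ ⊢
  linarith [dist_triangle x w.1 z]

lemma closedBall_prod_Ici_subset_cone {Y : Type*} [MetricSpace Y] {x x' : Y} {δ t : ℝ}
    (hx' : x' ∈ ball x δ) (ht : 2 * δ ≤ t) : closedBall x δ ×ˢ Ici t ⊆ cone x' := by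
  rintro w ⟨hw₁, hw₂⟩
  show dist x' w.1 < w.2
  rw [mem_ball] at hx'
  rw [mem_closedBall, dist_comm] at hw₁
  linarith [dist_triangle x' x w.1, mem_Ici.1 hw₂]

end Cones

section Ainf

variable {μ : Measure X} {f : X × ℝ → ℂ} {K : Set (X × ℝ)}

lemma essSup_restrict_le_Ainf {S : Set (X × ℝ)} {x : X} (hS : S ⊆ cone x) :
    essSup (fun w => (‖f w‖₊ : ℝ≥0∞)) ((muPlus μ).restrict S) ≤ Ainf μ f x :=
  essSup_mono_measure' (Measure.restrict_mono hS le_rfl)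

lemma Ainf_indicator_le (hf : Measurable f) (x : X) :
    Ainf μ (K.indicator f) x ≤ essSup (fun w => (‖f w‖₊ : ℝ≥0∞)) ((muPlus μ).restrict K) :=
  (essSup_mono_measure' Measure.restrict_le_self).trans (essSup_nnnorm_indicator_le hf _)

lemma Ainf_indicator_eq_zero [OpensMeasurableSpace X] {x : X} (hK : Disjoint (cone x) K) :
    Ainf μ (K.indicator f) x = 0 := by
  refine nonpos_iff_eq_zero.1 (essSup_le_of_ae_le 0 ?_)
  filter_upwards [ae_restrict_mem (measurableSet_cone x)] with w hw
  simp [indicator_of_notMem (hK.notMem_of_mem_left hw)]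

lemma essSup_mul_rpow_le_eLpNorm_Ainf [OpensMeasurableSpace X] {p : ℝ≥0∞} (hp₀ : p ≠ 0)
    (hp : p ≠ ∞) {S : Set (X × ℝ)} {B : Set X} (hB : MeasurableSet B)
    (hS : ∀ x ∈ B, S ⊆ cone x) :
    essSup (fun w => (‖f w‖₊ : ℝ≥0∞)) ((muPlus μ).restrict S) * μ B ^ (1 / p.toReal) ≤
      eLpNorm (Ainf μ f) p μ := by
  rw [← enorm_eq_self (essSup _ _), ← eLpNorm_indicator_const hB hp₀ hp]
  refine eLpNorm_mono_enorm fun x => ?_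
  by_cases hx : x ∈ B
  · simpa [indicator_of_mem hx] using essSup_restrict_le_Ainf (hS x hx)
  · simp [indicator_of_notMem hx]

end Ainf

section TPinf

variable {μ : Measure X} {f : X × ℝ → ℂ} {K : Set (X × ℝ)}

lemma tentNormQInf_eq_eLpNorm {p : ℝ≥0∞} (hp₀ : p ≠ 0) (hp : p ≠ ∞) :
    tentNormQInf μ p.toReal f = eLpNorm (Ainf μ f) p μ := by
  simp [eLpNorm_eq_eLpNorm' hp₀ hp, eLpNorm', tentNormQInf]

/-- For `p = ∞` the factor is `μ (ball z (r + b)) ^ (1 / 0) = 1`. -/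
lemma TPinf_indicator_le [OpensMeasurableSpace X] {p : ℝ≥0∞} (hp : p ≠ 0) {z : X} {r b : ℝ}
    (hK : K ⊆ ball z r ×ˢ Iio b) (hf : Measurable f) :
    TPinf μ p (K.indicator f) ≤
      μ (ball z (r + b)) ^ (1 / p.toReal) *
        essSup (fun w => (‖f w‖₊ : ℝ≥0∞)) ((muPlus μ).restrict K) := by
  by_cases hp_top : p = ∞
  · simpa [TPinf, hp_top] using essSup_nnnorm_indicator_le hf (muPlus μ)
  rw [TPinf, if_neg hp_top, tentNormQInf_eq_eLpNorm hp hp_top, mul_comm,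
    ← enorm_eq_self (essSup _ _), ← eLpNorm_indicator_const measurableSet_ball hp hp_top]
  refine eLpNorm_mono_enorm fun x => ?_
  by_cases hx : x ∈ ball z (r + b)
  · simpa [indicator_of_mem hx] using Ainf_indicator_le hf x
  · rw [Ainf_indicator_eq_zero (disjoint_left.2 fun w hw hwK =>
      hx (mem_ball_of_mem_cone hw (hK hwK).1 (hK hwK).2))]
    exact zero_le

lemma exists_essSup_restrict_le_mul_eLpNorm_Ainf [OpensMeasurableSpace X] (hμ : Nondeg μ)
    (hd : Doubling μ) {p : ℝ≥0∞} (hp₀ : p ≠ 0) (hp : p ≠ ∞) {z : X} {r a : ℝ} (hr : 0 < r)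
    (ha : 0 < a) (hK : K ⊆ ball z r ×ˢ Ici a) :
    ∃ C : ℝ≥0∞, C ≠ ∞ ∧ ∀ f : X × ℝ → ℂ, Measurable f →
      essSup (fun w => (‖f w‖₊ : ℝ≥0∞)) ((muPlus μ).restrict K) ≤
        C * eLpNorm (Ainf μ f) p μ := by
  obtain ⟨N, hNball, hN, hcover⟩ := hd.exists_finite_cover_ball hμ z hr (half_pos ha)
  obtain ⟨m, hm₀, hm, hmball⟩ := hd.exists_le_measure_ball hμ z r (half_pos ha)
  have hq : 0 ≤ 1 / p.toReal := by positivity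
  set c := m ^ (1 / p.toReal)
  have hc₀ : c ≠ 0 := (ENNReal.rpow_pos hm₀ hm).ne'
  have hc : c ≠ ∞ := ENNReal.rpow_ne_top_of_nonneg hq hm
  refine ⟨c⁻¹, ENNReal.inv_ne_top.2 hc₀, fun f hf => ?_⟩
  refine essSup_restrict_le_of_subset_biUnion hN (U := fun y => closedBall y (a / 2) ×ˢ univ)
    (fun w hw => ?_) hf.nnnorm.coe_nnreal_ennreal fun y hy => ?_
  · obtain ⟨y, hy, hwy⟩ := mem_iUnion₂.1 (hcover (hK hw).1)
    exact mem_iUnion₂.2 ⟨y, hy, hwy, mem_univ _⟩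
  have hcone : ∀ x ∈ ball y (a / 2), K ∩ (closedBall y (a / 2) ×ˢ univ) ⊆ cone x :=
    fun x hx w ⟨hwK, hwy, _⟩ =>
      closedBall_prod_Ici_subset_cone hx (by linarith) ⟨hwy, (hK hwK).2⟩
  have hloc := essSup_mul_rpow_le_eLpNorm_Ainf (μ := μ) (f := f) hp₀ hp measurableSet_ball hcone
  rw [mul_comm, ← div_eq_mul_inv, ENNReal.le_div_iff_mul_le (Or.inl hc₀) (Or.inl hc)]
  exact (mul_le_mul_right (ENNReal.rpow_le_rpow (hmball y (hNball hy)) hq) _).trans hloc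

lemma exists_essSup_restrict_le_mul_TPinf [OpensMeasurableSpace X] (hμ : Nondeg μ) (hd : Doubling μ)
    {p : ℝ≥0∞} (hp : p ≠ 0) {z : X} {r a : ℝ} (hr : 0 < r) (ha : 0 < a)
    (hK : K ⊆ ball z r ×ˢ Ici a) :
    ∃ C : ℝ≥0∞, C ≠ ∞ ∧ ∀ f : X × ℝ → ℂ, Measurable f →
      essSup (fun w => (‖f w‖₊ : ℝ≥0∞)) ((muPlus μ).restrict K) ≤ C * TPinf μ p f := by
  by_cases hp_top : p = ∞
  · exact ⟨1, one_ne_top, fun f _ => by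
      simpa [TPinf, hp_top] using essSup_mono_measure' Measure.restrict_le_self⟩
  obtain ⟨C, hC, hK⟩ := exists_essSup_restrict_le_mul_eLpNorm_Ainf hμ hd hp hp_top hr ha hK
  refine ⟨C, hC, fun f hf => ?_⟩
  rw [TPinf, if_neg hp_top, tentNormQInf_eq_eLpNorm hp hp_top]
  exact hK f hf

end TPinf

theorem stmt18_general {X : Type*} [MetricSpace X] [MeasurableSpace X] [BorelSpace X]
    (μ : Measure X) (hμ : Nondeg μ) (hd : Doubling μ) (p : ℝ≥0∞) (hp : 0 < p)
    (K : Set (X × ℝ)) (z : X) (r a b : ℝ) (hr : 0 < r) (ha : 0 < a) (hab : a < b)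
    (hK : K ⊆ ball z r ×ˢ Ioo a b) :
    ∃ C₁ C₂ : ℝ≥0∞, C₁ < ∞ ∧ C₂ < ∞ ∧ ∀ f : X × ℝ → ℂ, Measurable f →
      TPinf μ p (K.indicator f) ≤
          C₁ * essSup (fun w => (‖f w‖₊ : ℝ≥0∞)) ((muPlus μ).restrict K) ∧
      essSup (fun w => (‖f w‖₊ : ℝ≥0∞)) ((muPlus μ).restrict K) ≤ C₂ * TPinf μ p f := by
  obtain ⟨C₂, hC₂, hK₂⟩ := exists_essSup_restrict_le_mul_TPinf hμ hd hp.ne' hr ha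
    (hK.trans (Set.prod_mono subset_rfl (Ioo_subset_Ioi_self.trans Ioi_subset_Ici_self)))
  refine ⟨μ (ball z (r + b)) ^ (1 / p.toReal), C₂,
    ENNReal.rpow_lt_top_of_nonneg (by positivity) (hμ z (r + b) (by linarith)).2.ne, hC₂.lt_top,
    fun f hf => ⟨TPinf_indicator_le hp.ne'
      (hK.trans (Set.prod_mono subset_rfl Ioo_subset_Iio_self)) hf, hK₂ f hf⟩⟩

/-- For `X` doubling, `p ∈ (0,∞]` and a subset `K` of a cylinder:
`‖1_K f‖_{T^{p,∞}} ≲_{K,p} ‖f‖_{L^∞(K)} ≲_{K,p} ‖f‖_{T^{p,∞}}`. -/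
theorem stmt18 {X : Type*} [MetricSpace X] [MeasurableSpace X] [BorelSpace X] [Nonempty X]
    (μ : Measure X) (hμ : Nondeg μ) (hd : Doubling μ) (p : ℝ≥0∞) (hp : 0 < p)
    (K : Set (X × ℝ)) (z : X) (r a b : ℝ) (hr : 0 < r) (ha : 0 < a) (hab : a < b)
    (hK : K ⊆ ball z r ×ˢ Ioo a b) :
    ∃ C₁ C₂ : ℝ≥0∞, C₁ < ∞ ∧ C₂ < ∞ ∧ ∀ f : X × ℝ → ℂ, Measurable f →
      TPinf μ p (K.indicator f) ≤
          C₁ * essSup (fun w => (‖f w‖₊ : ℝ≥0∞)) ((muPlus μ).restrict K) ∧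
      essSup (fun w => (‖f w‖₊ : ℝ≥0∞)) ((muPlus μ).restrict K) ≤ C₂ * TPinf μ p f :=
  stmt18_general μ hμ hd p hp K z r a b hr ha hab hK

end WTS
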